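/- Let F_q be a finite field with q elements, let m ≥ 1, and let d1, …, dm, k be natural numbers with k ≤ di for all i. The number of m-tuples (h1, …, hm) of monic polynomials over F_q with deg hi = di for all i and whose (monic) greatest common divisor has degree at least k equals q^{(d1+⋯+dm) − (m−1)k}. -/

import Mathlib

/-!
A tuple `h` of monic polynomials whose gcd `G` has degree `e` factors uniquely as `G • u` with `u`
a coprime tuple of degrees `dᵢ - e`, so there are `q ^ e * c (d - e)` such tuples, where `c`
counts coprime tuples. Summing over `e = k + j ≥ k` gives `q ^ k * ∑ⱼ q ^ j * c (d - k - j)`, and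
the sum is the same decomposition, now over all gcd degrees, of the `q ^ ∑ (dᵢ - k)` monic tuples
of degrees `d - k`.
-/

open Polynomial

lemma Set.ncard_eq_sum_ncard_fiberwise {α β : Type*} [DecidableEq β] {s : Set α} (hs : s.Finite)
    {f : α → β} {t : Finset β} (H : Set.MapsTo f s t) :
    s.ncard = ∑ b ∈ t, {a ∈ s | f a = b}.ncard := by
  rw [Set.ncard_eq_toFinset_card s hs, Finset.card_eq_sum_card_fiberwise (by simpa using H)]
  refine Finset.sum_congr rfl fun b _ ↦ ?_
  rw [← Set.ncard_coe_finset]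
  congr 1
  ext a
  simp

namespace Polynomial

section MonicOfNatDegree

variable (R : Type*)

def monicOfNatDegree [Semiring R] (n : ℕ) : Set R[X] := {p | p.Monic ∧ p.natDegree = n}

def monicTuples [Semiring R] {ι : Type*} (d : ι → ℕ) : Set (ι → R[X]) :=
  {h | ∀ i, h i ∈ monicOfNatDegree R (d i)}

variable {R} [Ring R] [Nontrivial R]

lemma monicOfNatDegree_eq_image (n : ℕ) :
    monicOfNatDegree R n = (X ^ n + ·) '' degreeLT R n := by
  ext p
  constructor
  · rintro ⟨hp, rfl⟩
    refine ⟨p - X ^ p.natDegree, ?_, add_sub_cancel _ _⟩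
    rw [SetLike.mem_coe, mem_degreeLT, ← degree_eq_natDegree hp.ne_zero]
    exact degree_sub_lt_left (by rw [degree_X_pow, degree_eq_natDegree hp.ne_zero]) hp.ne_zero
      (by rw [hp.leadingCoeff, leadingCoeff_X_pow])
  · rintro ⟨r, hr, rfl⟩
    rw [SetLike.mem_coe, mem_degreeLT] at hr
    refine ⟨monic_X_pow_add hr, natDegree_eq_of_degree_eq_some ?_⟩
    rw [degree_add_eq_left_of_degree_lt (by rwa [degree_X_pow]), degree_X_pow]

variable [Fintype R]

lemma ncard_monicOfNatDegree (n : ℕ) :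
    (monicOfNatDegree R n).ncard = Fintype.card R ^ n := by
  rw [monicOfNatDegree_eq_image, Set.ncard_image_of_injective _ (add_right_injective _),
    ← Nat.card_coe_set_eq, SetLike.coe_sort_coe, Nat.card_congr (degreeLTEquiv R n).toEquiv]
  simp

lemma finite_monicOfNatDegree (n : ℕ) : (monicOfNatDegree R n).Finite :=
  Set.finite_of_ncard_pos <| by
    rw [ncard_monicOfNatDegree]
    exact pow_pos Fintype.card_pos n

variable {ι : Type*} [Fintype ι]

lemma ncard_monicTuples (d : ι → ℕ) :
    (monicTuples R d).ncard = Fintype.card R ^ ∑ i, d i := by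
  have e : monicTuples R d ≃ ∀ i, monicOfNatDegree R (d i) := Equiv.subtypePiEquivPi
  rw [← Nat.card_coe_set_eq, Nat.card_congr e, Nat.card_pi]
  simp_rw [Nat.card_coe_set_eq, ncard_monicOfNatDegree, Finset.prod_pow_eq_pow_sum]

lemma finite_monicTuples (d : ι → ℕ) : (monicTuples R d).Finite :=
  (Set.Finite.pi fun i ↦ finite_monicOfNatDegree (d i)).subset fun _ hh i _ ↦ hh i

end MonicOfNatDegree

section Gcd

variable {F ι : Type*} [Field F] [DecidableEq F]

lemma Monic.finset_gcd_mul_left {g : F[X]} (hg : g.Monic) (s : Finset ι) (u : ι → F[X]) :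
    s.gcd (fun i ↦ g * u i) = g * s.gcd u := by
  rw [Finset.gcd_mul_left, hg.normalize_eq_self]

lemma monic_finset_gcd {s : Finset ι} (hs : s.Nonempty) {h : ι → F[X]}
    (hh : ∀ i ∈ s, (h i).Monic) : (s.gcd h).Monic := by
  obtain ⟨i, hi⟩ := hs
  have hne : s.gcd h ≠ 0 := mt (Finset.gcd_eq_zero_iff.mp · i hi) (hh i hi).ne_zero
  simpa only [Finset.normalize_gcd] using monic_normalize hne

variable (F) [Fintype ι]

def coprimeMonicTuples (d : ι → ℕ) : Set (ι → F[X]) :=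
  {u ∈ monicTuples F d | Finset.univ.gcd u = 1}

variable {F} [Nonempty ι]

lemma bijOn_mul_coprimeMonicTuples {e : ℕ} {d : ι → ℕ} (he : ∀ i, e ≤ d i) :
    Set.BijOn (fun p : F[X] × (ι → F[X]) ↦ fun i ↦ p.1 * p.2 i)
      (monicOfNatDegree F e ×ˢ coprimeMonicTuples F (fun i ↦ d i - e))
      {h ∈ monicTuples F d | (Finset.univ.gcd h).natDegree = e} := by
  refine ⟨?_, ?_, ?_⟩
  · rintro ⟨g, u⟩ ⟨⟨hg, hge⟩, hu, hu1⟩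
    dsimp only at hg hge hu hu1 ⊢
    subst hge
    refine ⟨fun i ↦ ⟨hg.mul (hu i).1, ?_⟩, ?_⟩
    · rw [hg.natDegree_mul (hu i).1, (hu i).2]
      exact Nat.add_sub_cancel' (he i)
    · simp only [hg.finset_gcd_mul_left, hu1, mul_one]
  · rintro ⟨g, u⟩ ⟨hg, -, hu1⟩ ⟨g', u'⟩ ⟨hg', -, hu1'⟩ heq
    replace heq : (fun i ↦ g * u i) = fun i ↦ g' * u' i := heq
    have hgg' : g = g' := by
      simpa only [hg.1.finset_gcd_mul_left, hg'.1.finset_gcd_mul_left, hu1, hu1', mul_one]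
        using congrArg Finset.univ.gcd heq
    subst hgg'
    rw [Prod.mk.injEq, funext_iff]
    exact ⟨rfl, fun i ↦ mul_left_cancel₀ hg.1.ne_zero (congrFun heq i)⟩
  · rintro h ⟨hh, rfl⟩
    set G := Finset.univ.gcd h
    have hG : G.Monic := monic_finset_gcd Finset.univ_nonempty fun i _ ↦ (hh i).1
    have hGu : ∀ i, G * (h i /ₘ G) = h i := fun i ↦ by
      obtain ⟨c, hc⟩ := Finset.gcd_dvd (Finset.mem_univ i) (f := h)
      rw [hc, mul_divByMonic_cancel_left c hG]
    have hu : ∀ i, (h i /ₘ G).Monic := fun i ↦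
      hG.of_mul_monic_left (by rw [hGu]; exact (hh i).1)
    refine ⟨(G, fun i ↦ h i /ₘ G), ⟨⟨hG, rfl⟩, fun i ↦ ⟨hu i, ?_⟩, ?_⟩, _root_.funext hGu⟩
    · have hdeg := congrArg natDegree (hGu i)
      rw [hG.natDegree_mul (hu i), (hh i).2] at hdeg
      exact Nat.eq_sub_of_add_eq' hdeg
    · refine mul_left_cancel₀ hG.ne_zero ?_
      rw [← hG.finset_gcd_mul_left, mul_one]
      exact congrArg _ (_root_.funext hGu)

variable [Fintype F]

lemma ncard_gcd_natDegree_eq {e : ℕ} {d : ι → ℕ} (he : ∀ i, e ≤ d i) :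
    {h ∈ monicTuples F d | (Finset.univ.gcd h).natDegree = e}.ncard =
      Fintype.card F ^ e * (coprimeMonicTuples F fun i ↦ d i - e).ncard := by
  rw [← (bijOn_mul_coprimeMonicTuples he).ncard_eq, Set.ncard_prod, ncard_monicOfNatDegree]

lemma ncard_gcd_natDegree_ge_eq_sum {d : ι → ℕ} {b : ℕ} (hb : IsLeast (Set.range d) b) (k : ℕ) :
    {h ∈ monicTuples F d | k ≤ (Finset.univ.gcd h).natDegree}.ncard =
      ∑ e ∈ Finset.Ico k (b + 1),
        Fintype.card F ^ e * (coprimeMonicTuples F fun i ↦ d i - e).ncard := by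
  obtain ⟨⟨i₀, rfl⟩, hb⟩ := hb
  rw [Set.ncard_eq_sum_ncard_fiberwise ((finite_monicTuples d).sep _)
    (f := fun h ↦ (Finset.univ.gcd h).natDegree)]
  · refine Finset.sum_congr rfl fun e he ↦ ?_
    rw [Finset.mem_Ico] at he
    rw [← ncard_gcd_natDegree_eq fun i ↦ by
      have := hb (Set.mem_range_self i)
      omega]
    congr 1
    ext h
    exact ⟨fun ⟨⟨hh, _⟩, hd⟩ ↦ ⟨hh, hd⟩, fun ⟨hh, hd⟩ ↦ ⟨⟨hh, hd ▸ he.1⟩, hd⟩⟩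
  · rintro h ⟨hh, hk⟩
    have := natDegree_le_of_dvd (Finset.gcd_dvd (Finset.mem_univ i₀)) (hh i₀).1.ne_zero
    simp only [Finset.coe_Ico, Set.mem_Ico]
    rw [(hh i₀).2] at this
    omega

lemma ncard_gcd_natDegree_ge {d : ι → ℕ} {k : ℕ} (hk : ∀ i, k ≤ d i) :
    {h ∈ monicTuples F d | k ≤ (Finset.univ.gcd h).natDegree}.ncard =
      Fintype.card F ^ k * Fintype.card F ^ ∑ i, (d i - k) := by
  obtain ⟨i₀, hi₀⟩ := Finite.exists_min d
  have hb : IsLeast (Set.range d) (d i₀) :=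
    ⟨Set.mem_range_self i₀, Set.forall_mem_range.2 hi₀⟩
  have hb' : IsLeast (Set.range fun i ↦ d i - k) (d i₀ - k) :=
    ⟨Set.mem_range_self i₀, Set.forall_mem_range.2 fun i ↦ Nat.sub_le_sub_right (hi₀ i) k⟩
  have hsep : {h ∈ monicTuples F (fun i ↦ d i - k) | 0 ≤ (Finset.univ.gcd h).natDegree} =
      monicTuples F (fun i ↦ d i - k) :=
    Set.sep_eq_self_iff_mem_true.2 fun _ _ ↦ Nat.zero_le _
  rw [← ncard_monicTuples, ← hsep, ncard_gcd_natDegree_ge_eq_sum hb,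
    ncard_gcd_natDegree_ge_eq_sum hb', Finset.sum_Ico_eq_sum_range,
    Finset.sum_Ico_eq_sum_range, Finset.mul_sum, Nat.sub_zero, Nat.sub_add_comm (hk i₀)]
  refine Finset.sum_congr rfl fun j _ ↦ ?_
  simp only [zero_add, pow_add, mul_assoc, Nat.sub_sub]

end Gcd

end Polynomial

/-- Over a finite field with `q` elements, for `m ≥ 1` and `k ≤ dᵢ` for all `i`, the number of
`m`-tuples of monic polynomials of degrees `d₁, …, d_m` whose monic gcd has degree at least `k`
equals `q^((d₁+⋯+d_m) − (m−1)·k)`. -/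
theorem count_gcd_deg_ge_tuples (F : Type*) [Field F] [Fintype F] [DecidableEq F] (q : ℕ)
    (hq : Fintype.card F = q) (m : ℕ) (hm : 1 ≤ m) (d : Fin m → ℕ) (k : ℕ)
    (hk : ∀ i, k ≤ d i) :
    Set.ncard {h : Fin m → F[X] | (∀ i, (h i).Monic ∧ (h i).natDegree = d i) ∧
        k ≤ (Finset.univ.gcd h).natDegree}
      = q ^ ((∑ i, d i) - (m - 1) * k) := by
  subst hq
  have : Nonempty (Fin m) := ⟨⟨0, hm⟩⟩
  change {h ∈ monicTuples F d | k ≤ (Finset.univ.gcd h).natDegree}.ncard = _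
  have hmk : m * k ≤ ∑ i, d i := by
    simpa using Finset.sum_le_sum fun i (_ : i ∈ Finset.univ) ↦ hk i
  rw [ncard_gcd_natDegree_ge hk, ← pow_add, Finset.sum_tsub_distrib _ fun i _ ↦ hk i,
    Finset.sum_const, Finset.card_univ, Fintype.card_fin, smul_eq_mul, Nat.sub_one_mul]
  have := Nat.le_mul_of_pos_left k hm
  congr 1
  omega
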